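/- Let n ≥ 8, let U be the group with generators z, t_1, …, t_{n−1} and the Schur relations, and let π : U → S_n be the surjection with π(z) = 1 and π(t_i) = (i, i+1). Then V := π^{−1}(A_n) is a stem extension of A_n with kernel ⟨z⟩ of order 2: that is, ⟨z⟩ ⊆ Z(V) ∩ [V,V] and V/⟨z⟩ ≅ A_n (in particular |V| = n!). -/

import Mathlib

/-!
Modulo `z`, which the relations make a central involution, the generators satisfy the Coxeter
relations of `Sₙ`, and a coset enumeration turns this into `|U| ≤ 2 · n!`: every element of
`⟨z, t₁, …, t_a⟩` lies in `⟨z, t₁, …, t_{a-1}⟩ · t_a t_{a-1} ⋯ t_{a-k+1}` for some `0 ≤ k ≤ a`,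
because right multiplication by a generator moves through the block (up to a power of `z`),
lengthens or shortens it, or crosses it by a braid move. On the other hand `z ≠ 1`, since
`z ↦ -1`, `tᵢ ↦ eᵢ - eᵢ₊₁` respects the relations in the Clifford algebra of `-½` times the
standard form on `ℚ^(ℕ)`. Hence `ker π = ⟨z⟩` has order `2` and `|V| = 2 · |Aₙ| = n!`. Finally
`z = [t₁t₃, t₁t₅]` with `t₁t₃, t₁t₅ ∈ V`, so `z ∈ [V, V]`.
-/

/-- The generator type for Schur's presentation of a double cover of `Sₙ`:
`none` stands for the central element `z`, and `some i` (for `i : Fin (n-1)`) stands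
for the generator `t_{i+1}` (which will map to the transposition `(i+1, i+2)` of
`{1, ..., n}`). -/
abbrev SchurGen (n : ℕ) := Option (Fin (n - 1))

/-- The relators of Schur's presentation: `z² = 1`; `z tᵢ = tᵢ z`; `tᵢ² = z`;
`(tᵢ tᵢ₊₁)³ = z`; and `tᵢ tⱼ = z tⱼ tᵢ` for `|i - j| ≥ 2`. -/
def schurRels (n : ℕ) : Set (FreeGroup (SchurGen n)) :=
  let z : FreeGroup (SchurGen n) := FreeGroup.of none
  let t : Fin (n - 1) → FreeGroup (SchurGen n) := fun i => FreeGroup.of (some i)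
  {z ^ 2}
    ∪ {r | ∃ i, r = (z * t i) * (t i * z)⁻¹}
    ∪ {r | ∃ i, r = t i ^ 2 * z⁻¹}
    ∪ {r | ∃ i j : Fin (n - 1), (j : ℕ) = (i : ℕ) + 1 ∧ r = (t i * t j) ^ 3 * z⁻¹}
    ∪ {r | ∃ i j : Fin (n - 1), ((i : ℕ) + 2 ≤ (j : ℕ) ∨ (j : ℕ) + 2 ≤ (i : ℕ)) ∧
        r = (t i * t j) * (z * t j * t i)⁻¹}

open Subgroup Cardinal Pointwise Equiv Equiv.Perm PresentedGroup
open scoped commutatorElement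

theorem Subgroup.closure_subset_of_mul_mem {G : Type*} [Group G] {S X : Set G} (h1 : 1 ∈ X)
    (hmul : ∀ x ∈ X, ∀ s ∈ S, x * s ∈ X) (hinv : ∀ x ∈ X, ∀ s ∈ S, x * s⁻¹ ∈ X) :
    (closure S : Set G) ⊆ X := fun _ hg =>
  closure_induction_right h1 (fun x _ s hs hx => hmul x hx s hs)
    (fun x _ s hs hx => hinv x hx s hs) hg

namespace MonoidHom

variable {G H : Type*} [Group G] [Group H] {f : G →* H}

theorem card_eq_card_ker_mul_of_surjective (hf : Function.Surjective f) :
    Nat.card G = Nat.card f.ker * Nat.card H := by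
  rw [← f.ker.card_mul_index, Subgroup.index_ker, f.range_eq_top.mpr hf, card_top]

theorem ker_eq_zpowers_of_card_le [Finite G] (hf : Function.Surjective f) {z : G} (hz : f z = 1)
    (hord : orderOf z = 2) (hcard : Nat.card G ≤ 2 * Nat.card H) : f.ker = zpowers z := by
  have : Finite H := Finite.of_surjective f hf
  refine (eq_of_le_of_card_ge (zpowers_le.mpr hz) ?_).symm
  rw [Nat.card_zpowers, hord]
  rw [card_eq_card_ker_mul_of_surjective hf] at hcard
  exact Nat.le_of_mul_le_mul_right hcard Nat.card_pos

theorem ker_subgroupComap_eq_zpowers {z : G} (hker : f.ker = zpowers z) (A : Subgroup H)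
    (hz : z ∈ A.comap f) : (f.subgroupComap A).ker = zpowers ⟨z, hz⟩ := by
  ext x
  rw [mem_ker, Subtype.ext_iff]
  change f x = 1 ↔ _
  rw [← mem_ker, hker, mem_zpowers_iff, mem_zpowers_iff]
  simp only [Subtype.ext_iff, SubgroupClass.coe_zpow]

theorem card_comap_of_ker_eq_zpowers (hf : Function.Surjective f) {z : G}
    (hker : f.ker = zpowers z) (A : Subgroup H) :
    Nat.card (A.comap f) = orderOf z * Nat.card A := by
  have hz : z ∈ A.comap f := by
    rw [mem_comap, mem_ker.mp (hker ▸ mem_zpowers z)]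
    exact one_mem A
  rw [card_eq_card_ker_mul_of_surjective (f.subgroupComap_surjective_of_surjective A hf),
    ker_subgroupComap_eq_zpowers hker A hz, Nat.card_zpowers, orderOf_mk]

end MonoidHom

namespace Equiv.Perm

theorem surjective_of_swap_castSucc_succ_mem_range {G : Type*} [Group G] {m : ℕ}
    (f : G →* Perm (Fin (m + 1))) (hf : ∀ i : Fin m, swap i.castSucc i.succ ∈ f.range) :
    Function.Surjective f := by
  rw [← MonoidHom.range_eq_top, eq_top_iff,
    ← closure_eq_top_of_mclosure_eq_top (mclosure_swap_castSucc_succ m), closure_le]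
  rintro _ ⟨i, rfl⟩
  exact hf i

theorem swap_mul_swap_mem_alternatingGroup {α : Type*} [Fintype α] [DecidableEq α]
    {a b c d : α} (hab : a ≠ b) (hcd : c ≠ d) : swap a b * swap c d ∈ alternatingGroup α := by
  rw [mem_alternatingGroup, map_mul, sign_swap hab, sign_swap hcd, Int.units_mul_self]

end Equiv.Perm

namespace SchurCover

section Group

variable {G : Type*} [Group G]

/-- Indexed from `0`: the paper's `tᵢ₊₁` is `t i`. -/
structure IsSchurFamily (N : ℕ) (z : G) (t : ℕ → G) : Prop where
  sq_z : z ^ 2 = 1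
  commute : ∀ i < N, Commute z (t i)
  sq_t : ∀ i < N, t i ^ 2 = z
  cube : ∀ i, i + 1 < N → (t i * t (i + 1)) ^ 3 = z
  far : ∀ i j, i < N → j < N → (i + 2 ≤ j ∨ j + 2 ≤ i) → t i * t j = z * t j * t i

def descProd (t : ℕ → G) (a : ℕ) : ℕ → G
  | 0 => 1
  | k + 1 => descProd t a k * t (a - k)

@[simp] lemma descProd_zero (t : ℕ → G) (a : ℕ) : descProd t a 0 = 1 := rfl

lemma descProd_succ (t : ℕ → G) (a k : ℕ) :
    descProd t a (k + 1) = descProd t a k * t (a - k) := rfl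

@[simp] lemma descProd_one (t : ℕ → G) (a : ℕ) : descProd t a 1 = t a := by
  simp [descProd_succ]

lemma descProd_add (t : ℕ → G) (a m r : ℕ) :
    descProd t a (m + r) = descProd t a m * descProd t (a - m) r := by
  induction r with
  | zero => simp
  | succ r ih => rw [← Nat.add_assoc, descProd_succ, ih, descProd_succ, mul_assoc, Nat.sub_sub]

def closureUpTo (z : G) (t : ℕ → G) (M : ℕ) : Subgroup G :=
  closure (insert z (t '' Set.Iio M))

namespace IsSchurFamily

variable {N : ℕ} {z : G} {t : ℕ → G}

lemma mul_self_z (h : IsSchurFamily N z t) : z * z = 1 := by rw [← sq, h.sq_z]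

lemma inv_z (h : IsSchurFamily N z t) : z⁻¹ = z := inv_eq_of_mul_eq_one_left h.mul_self_z

lemma mul_self_t (h : IsSchurFamily N z t) {i : ℕ} (hi : i < N) : t i * t i = z := by
  rw [← sq, h.sq_t i hi]

lemma inv_t (h : IsSchurFamily N z t) {i : ℕ} (hi : i < N) : (t i)⁻¹ = t i * z :=
  inv_eq_of_mul_eq_one_right (by rw [← mul_assoc, h.mul_self_t hi, h.mul_self_z])

lemma commute_descProd (h : IsSchurFamily N z t) {a : ℕ} (ha : a < N) (k : ℕ) :
    Commute z (descProd t a k) := by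
  induction k with
  | zero => exact Commute.one_right z
  | succ k ih => exact ih.mul_right (h.commute _ (by omega))

lemma braid (h : IsSchurFamily N z t) {i : ℕ} (hi : i + 1 < N) :
    t i * t (i + 1) * t i = t (i + 1) * t i * t (i + 1) := by
  have hza := h.commute i (by omega)
  have hzb := h.commute (i + 1) hi
  have swap_a : ∀ v, t i * (z * v) = z * (t i * v) := fun v => by
    rw [← mul_assoc, ← hza.eq, mul_assoc]
  have swap_b : ∀ v, t (i + 1) * (z * v) = z * (t (i + 1) * v) := fun v => by
    rw [← mul_assoc, ← hzb.eq, mul_assoc]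
  calc t i * t (i + 1) * t i
      = (t i * t (i + 1)) ^ 3 * (t (i + 1) * t i * t (i + 1))⁻¹ := by rw [pow_three]; group
    _ = z * ((t (i + 1))⁻¹ * (t i)⁻¹ * (t (i + 1))⁻¹) := by rw [h.cube i hi]; group
    _ = t (i + 1) * t i * t (i + 1) := by
      rw [h.inv_t hi, h.inv_t (by omega)]
      simp only [mul_assoc, swap_a, swap_b, ← hza.eq, ← hzb.eq]
      simp only [← mul_assoc, h.mul_self_z, one_mul]

lemma commutatorElement_mul_mul (h : IsSchurFamily N z t) {i j k : ℕ} (hk : k < N)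
    (hij : i + 2 ≤ j) (hjk : j + 2 ≤ k) : ⁅t i * t j, t i * t k⁆ = z := by
  have hi : i < N := by omega
  have hj : j < N := by omega
  have hsquare : ∀ g, t i * z * t i * g = g := fun g => by
    rw [← (h.commute i hi).eq, mul_assoc z, h.mul_self_t hi, h.mul_self_z, one_mul]
  have e1 : t i * t j * (t i * t k) = t j * t k := by
    calc t i * t j * (t i * t k) = t i * (t j * t i) * t k := by group
      _ = t i * z * t i * (t j * t k) := by rw [h.far j i hj hi (Or.inr hij)]; group
      _ = t j * t k := hsquare _
  have e2 : t i * t k * (t i * t j) = z * (t j * t k) := by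
    calc t i * t k * (t i * t j) = t i * (t k * t i) * t j := by group
      _ = t i * z * t i * (t k * t j) := by rw [h.far k i hk hi (Or.inr (by omega))]; group
      _ = z * (t j * t k) := by rw [hsquare, h.far k j hk hj (Or.inr hjk), mul_assoc]
  rw [commutatorElement_def, show ∀ a b : G, a * b * a⁻¹ * b⁻¹ = a * b * (b * a)⁻¹ by
    intro a b; group, e1, e2, mul_inv_rev, mul_inv_cancel_left, h.inv_z]

lemma descProd_mul_of_far (h : IsSchurFamily N z t) {a i k : ℕ} (ha : a < N) (hi : i < N)
    (hfar : ∀ m < k, a - m + 2 ≤ i ∨ i + 2 ≤ a - m) :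
    descProd t a k * t i = z ^ k * (t i * descProd t a k) := by
  induction k with
  | zero => simp
  | succ k ih =>
    calc descProd t a k * t (a - k) * t i
        = descProd t a k * (z * t i * t (a - k)) := by
          rw [mul_assoc, h.far _ _ (by omega) hi (hfar k (by omega))]
      _ = z * (descProd t a k * t i) * t (a - k) := by
          rw [← mul_assoc, ← mul_assoc, ← (h.commute_descProd ha k).eq, mul_assoc z]
      _ = z ^ (k + 1) * (t i * descProd t a (k + 1)) := by
          rw [ih fun m hm => hfar m (by omega), descProd_succ]; group

lemma descProd_succ_mul (h : IsSchurFamily N z t) {a k : ℕ} (ha : a < N) :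
    descProd t a (k + 1) * t (a - k) = z * descProd t a k := by
  rw [descProd_succ, mul_assoc, h.mul_self_t (by omega), (h.commute_descProd ha k).eq]

/-- The generator `t (j + 1)` crosses the factor `t (j + 1) * t j` of the block by the braid
relation, and comes out as `t j`. -/
lemma descProd_mul_of_braid (h : IsSchurFamily N z t) {j p q : ℕ} (hN : j + 1 + p < N)
    (hq : q ≤ j) :
    descProd t (j + 1 + p) (p + 2 + q) * t (j + 1) =
      z ^ (p + q) * (t j * descProd t (j + 1 + p) (p + 2 + q)) := by
  set a := j + 1 + p
  have hsplit : descProd t a (p + 2 + q) =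
      descProd t a p * (t (j + 1) * t j) * descProd t (j - 1) q := by
    rw [descProd_add, descProd_add, show a - p = j + 1 by omega,
      show a - (p + 2) = j - 1 by omega, show 2 = 1 + 1 from rfl, descProd_add]
    simp [show j + 1 - 1 = j by omega, mul_assoc]
  have hright : descProd t (j - 1) q * t (j + 1) = z ^ q * (t (j + 1) * descProd t (j - 1) q) :=
    h.descProd_mul_of_far (by omega) (by omega) fun m hm => Or.inl (by omega)
  have hleft : descProd t a p * t j = z ^ p * (t j * descProd t a p) :=
    h.descProd_mul_of_far hN (by omega) fun m hm => Or.inr (by omega)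
  have hcomm : Commute (z ^ q) (descProd t a p * (t (j + 1) * t j)) :=
    ((h.commute_descProd hN p).mul_right
      ((h.commute _ (by omega)).mul_right (h.commute _ (by omega)))).pow_left q
  calc descProd t a (p + 2 + q) * t (j + 1)
      = descProd t a p * (t (j + 1) * t j) * (descProd t (j - 1) q * t (j + 1)) := by
        rw [hsplit]; group
    _ = z ^ q * (descProd t a p * (t (j + 1) * t j * t (j + 1))) * descProd t (j - 1) q := by
        rw [hright, ← mul_assoc, ← hcomm.eq]; group
    _ = z ^ q * (descProd t a p * t j * (t (j + 1) * t j * descProd t (j - 1) q)) := by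
        rw [← h.braid (by omega)]; group
    _ = z ^ (p + q) * (t j * descProd t a (p + 2 + q)) := by
        rw [hleft, hsplit]; group

lemma descProd_mul_mem (h : IsSchurFamily N z t) {a i k : ℕ} (ha : a < N) (hi : i ≤ a)
    (hk : k ≤ a + 1) :
    ∃ k' ≤ a + 1, ∃ y ∈ closureUpTo z t a, descProd t a k * t i = y * descProd t a k' := by
  have hz : z ∈ closureUpTo z t a := subset_closure (Set.mem_insert _ _)
  have ht : ∀ j < a, t j ∈ closureUpTo z t a :=
    fun j hj => subset_closure (Set.mem_insert_of_mem _ ⟨j, hj, rfl⟩)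
  rcases lt_trichotomy (i + k) a with hlt | heq | hgt
  · refine ⟨k, hk, z ^ k * t i, mul_mem (pow_mem hz _) (ht i (by omega)), ?_⟩
    rw [h.descProd_mul_of_far ha (by omega) fun m hm => Or.inr (by omega), mul_assoc]
  · refine ⟨k + 1, by omega, 1, one_mem _, ?_⟩
    rw [one_mul, descProd_succ, show a - k = i by omega]
  · rcases (show i + k = a + 1 ∨ a + 1 < i + k by omega) with hshrink | hbraid
    · obtain ⟨k', rfl⟩ : ∃ k', k = k' + 1 := ⟨k - 1, by omega⟩
      refine ⟨k', by omega, z, hz, ?_⟩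
      rw [show i = a - k' by omega]
      exact h.descProd_succ_mul ha
    · obtain ⟨j, p, q, rfl, rfl, rfl⟩ : ∃ j p q, i = j + 1 ∧ a = j + 1 + p ∧ k = p + 2 + q :=
        ⟨i - 1, a - i, k - (a - i) - 2, by omega, by omega, by omega⟩
      refine ⟨_, hk, z ^ (p + q) * t j, mul_mem (pow_mem hz _) (ht j (by omega)), ?_⟩
      rw [h.descProd_mul_of_braid ha (by omega), mul_assoc]

lemma closureUpTo_zero_subset (h : IsSchurFamily N z t) :
    (closureUpTo z t 0 : Set G) ⊆ {1, z} := by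
  have hgen : insert z (t '' Set.Iio 0) = {z} := by simp
  refine closure_subset_of_mul_mem (by simp) ?_ ?_ <;>
  · simp only [hgen, Set.mem_singleton_iff]
    rintro x (rfl | rfl) s rfl <;> simp [h.mul_self_z, h.inv_z]

lemma closureUpTo_succ_subset (h : IsSchurFamily N z t) {a : ℕ} (ha : a < N) :
    (closureUpTo z t (a + 1) : Set G) ⊆
      (closureUpTo z t a : Set G) * Set.range fun k : Fin (a + 2) => descProd t a k := by
  set X := (closureUpTo z t a : Set G) * Set.range fun k : Fin (a + 2) => descProd t a k
  have hmul_z : ∀ x ∈ X, x * z ∈ X := by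
    rintro _ ⟨y, hy, _, ⟨k, rfl⟩, rfl⟩
    refine ⟨y * z, mul_mem hy (subset_closure (Set.mem_insert _ _)), _, ⟨k, rfl⟩, ?_⟩
    dsimp only
    rw [mul_assoc, mul_assoc, (h.commute_descProd ha k).eq]
  have hmul_t : ∀ i ≤ a, ∀ x ∈ X, x * t i ∈ X := by
    rintro i hi _ ⟨y, hy, _, ⟨k, rfl⟩, rfl⟩
    obtain ⟨k', hk', y', hy', he⟩ := h.descProd_mul_mem ha hi (by omega : (k : ℕ) ≤ a + 1)
    refine ⟨y * y', mul_mem hy hy', _, ⟨⟨k', by omega⟩, rfl⟩, ?_⟩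
    dsimp only
    rw [mul_assoc _ _ (t i), he, mul_assoc]
  refine closure_subset_of_mul_mem ⟨1, one_mem _, 1, ⟨0, rfl⟩, one_mul 1⟩ ?_ ?_
  · rintro x hx s (rfl | ⟨i, hi, rfl⟩)
    · exact hmul_z x hx
    · exact hmul_t i (Nat.lt_succ_iff.mp hi) x hx
  · rintro x hx s (rfl | ⟨i, hi, rfl⟩)
    · rw [h.inv_z]
      exact hmul_z x hx
    · rw [h.inv_t (by simp at hi; omega), ← mul_assoc]
      exact hmul_z _ (hmul_t i (Nat.lt_succ_iff.mp hi) x hx)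

lemma mk_closureUpTo_le (h : IsSchurFamily N z t) {M : ℕ} (hM : M ≤ N) :
    #(closureUpTo z t M : Set G) ≤ 2 * (M + 1).factorial := by
  induction M with
  | zero =>
    refine (mk_le_mk_of_subset h.closureUpTo_zero_subset).trans (mk_insert_le.trans ?_)
    norm_num
  | succ M ih =>
    calc #(closureUpTo z t (M + 1) : Set G)
        ≤ #((closureUpTo z t M : Set G) * Set.range fun k : Fin (M + 2) => descProd t M k) :=
          mk_le_mk_of_subset (h.closureUpTo_succ_subset (by omega))
      _ ≤ #(closureUpTo z t M : Set G) * #(Set.range fun k : Fin (M + 2) => descProd t M k) :=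
          mk_mul_le
      _ ≤ 2 * (M + 1).factorial * (M + 2 : ℕ) := by
          gcongr
          · exact ih (by omega)
          · simpa using mk_range_le_lift (f := fun k : Fin (M + 2) => descProd t M k)
      _ = 2 * (M + 1 + 1).factorial := by
          rw [Nat.factorial_succ (M + 1)]; push_cast; ring

end IsSchurFamily

end Group

section Clifford

variable {R : Type*} [Ring R]

lemma mul_pow_three_eq_neg_one {x y : R} (hx : x * x = -1) (hy : y * y = -1)
    (hxy : x * y + y * x = 1) : (x * y) ^ 3 = -1 := by
  have hyx : y * x = 1 - x * y := eq_sub_of_add_eq' hxy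
  have hsq : x * y * (x * y) = x * y - 1 := by
    calc x * y * (x * y) = x * (y * x) * y := by noncomm_ring
      _ = x * y - x * x * (y * y) := by rw [hyx]; noncomm_ring
      _ = x * y - 1 := by rw [hx, hy]; noncomm_ring
  calc (x * y) ^ 3 = x * y * (x * y * (x * y)) := by noncomm_ring
    _ = -1 := by rw [hsq, mul_sub, hsq]; noncomm_ring

def unitOfMulSelfEqNegOne {x : R} (hx : x * x = -1) : Rˣ :=
  ⟨x, -x, by rw [mul_neg, hx, neg_neg], by rw [neg_mul, hx, neg_neg]⟩

theorem isSchurFamily_units {x : ℕ → R} (hsq : ∀ i, x i * x i = -1)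
    (hadj : ∀ i, x i * x (i + 1) + x (i + 1) * x i = 1)
    (hfar : ∀ i j, i + 2 ≤ j ∨ j + 2 ≤ i → x i * x j + x j * x i = 0) (N : ℕ) :
    IsSchurFamily N (-1) fun i => unitOfMulSelfEqNegOne (hsq i) where
  sq_z := by simp
  commute _ _ := Commute.neg_one_left _
  sq_t i _ := Units.ext (by simp [unitOfMulSelfEqNegOne, sq, hsq])
  cube i _ := Units.ext (by simpa [unitOfMulSelfEqNegOne] using
    mul_pow_three_eq_neg_one (hsq i) (hsq (i + 1)) (hadj i))
  far i j _ _ hij := Units.ext (by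
    simpa [unitOfMulSelfEqNegOne, eq_neg_iff_add_eq_zero] using hfar i j hij)

open CliffordAlgebra

/-- `-½` times the standard inner product, so that the simple roots `eᵢ - eᵢ₊₁` square to `-1`
in the Clifford algebra. -/
noncomputable abbrev rootForm : LinearMap.BilinForm ℚ (ℕ →₀ ℚ) :=
  -(2⁻¹ : ℚ) • Finsupp.basisSingleOne.toDual

noncomputable def simpleRoot (i : ℕ) : ℕ →₀ ℚ := Finsupp.single i 1 - Finsupp.single (i + 1) 1

lemma rootForm_single (i j : ℕ) :
    rootForm (Finsupp.single i 1) (Finsupp.single j 1) = if i = j then -2⁻¹ else 0 := by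
  have := Finsupp.basisSingleOne.toDual_apply (R := ℚ) i j
  simp only [Finsupp.coe_basisSingleOne] at this
  simp [this, apply_ite]

lemma rootForm_simpleRoot (i j : ℕ) : rootForm (simpleRoot i) (simpleRoot j) =
    (if i = j then -1 else 0) + (if i = j + 1 ∨ j = i + 1 then 2⁻¹ else 0) := by
  simp only [simpleRoot, map_sub, LinearMap.sub_apply, rootForm_single]
  split_ifs <;> first | omega | norm_num

theorem exists_isSchurFamily_clifford (N : ℕ) :
    ∃ t : ℕ → (CliffordAlgebra rootForm.toQuadraticMap)ˣ, IsSchurFamily N (-1) t := by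
  set Q := rootForm.toQuadraticMap
  have hsq (i : ℕ) : ι Q (simpleRoot i) * ι Q (simpleRoot i) = -1 := by
    rw [ι_sq_scalar, LinearMap.BilinMap.toQuadraticMap_apply, rootForm_simpleRoot]
    simp
  refine ⟨_, isSchurFamily_units hsq (fun i => ?_) (fun i j hij => ?_) N⟩
  all_goals
    rw [ι_mul_ι_add_swap, LinearMap.BilinMap.polar_toQuadraticMap, rootForm_simpleRoot,
      rootForm_simpleRoot]
    split_ifs <;> first | omega | norm_num

theorem neg_one_ne_one_clifford : (-1 : (CliffordAlgebra rootForm.toQuadraticMap)ˣ) ≠ 1 := by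
  intro h
  have h' : algebraMap ℚ (CliffordAlgebra rootForm.toQuadraticMap) (-1) = algebraMap ℚ _ 1 := by
    rw [map_neg, map_one]
    exact congrArg Units.val h
  exact absurd ((algebraMap ℚ _).injective h') (by norm_num)

end Clifford

section Presentation

/-- The generator `t_{i+1}` of the presentation, padded with `1` for `i ≥ n - 1`. -/
def schurT (n i : ℕ) : PresentedGroup (schurRels n) :=
  if h : i < n - 1 then of (some ⟨i, h⟩) else 1

variable {n : ℕ}

lemma schurT_of_lt {i : ℕ} (hi : i < n - 1) : schurT n i = of (some ⟨i, hi⟩) := dif_pos hi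

lemma commute_of_none_of_some (i : Fin (n - 1)) :
    Commute (of none : PresentedGroup (schurRels n)) (of (some i)) :=
  mk_eq_mk_of_mul_inv_mem (rels := schurRels n) (Or.inl (Or.inl (Or.inl (Or.inr ⟨i, rfl⟩))))

variable (n)

theorem isSchurFamily_schurT : IsSchurFamily (n - 1) (of none) (schurT n) where
  sq_z := by
    simpa [PresentedGroup.of] using
      one_of_mem (rels := schurRels n) (Or.inl (Or.inl (Or.inl (Or.inl rfl))))
  commute i hi := by
    rw [schurT_of_lt hi]
    exact commute_of_none_of_some _
  sq_t i hi := by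
    rw [schurT_of_lt hi]
    simpa [PresentedGroup.of] using mk_eq_mk_of_mul_inv_mem (rels := schurRels n)
      (Or.inl (Or.inl (Or.inr ⟨⟨i, hi⟩, rfl⟩)))
  cube i hi := by
    rw [schurT_of_lt (by omega), schurT_of_lt hi]
    simpa [PresentedGroup.of] using mk_eq_mk_of_mul_inv_mem (rels := schurRels n)
      (Or.inl (Or.inr ⟨⟨i, by omega⟩, ⟨i + 1, hi⟩, rfl, rfl⟩))
  far i j hi hj hij := by
    rw [schurT_of_lt hi, schurT_of_lt hj]
    simpa [PresentedGroup.of] using mk_eq_mk_of_mul_inv_mem (rels := schurRels n)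
      (Or.inr ⟨⟨i, hi⟩, ⟨j, hj⟩, hij, rfl⟩)

theorem of_none_ne_one_of_isSchurFamily {H : Type*} [Group H] {z : H} {t : ℕ → H}
    (h : IsSchurFamily (n - 1) z t) (hz : z ≠ 1) :
    (of none : PresentedGroup (schurRels n)) ≠ 1 := by
  let f : SchurGen n → H := fun o => o.elim z fun i => t i
  have hrels : ∀ r ∈ schurRels n, FreeGroup.lift f r = 1 := by
    intro r hr
    simp only [schurRels, Set.mem_union, Set.mem_ofPred_eq, Set.mem_singleton_iff] at hr
    rcases hr with ((((rfl | ⟨i, rfl⟩) | ⟨i, rfl⟩) | ⟨i, j, hij, rfl⟩) | ⟨i, j, hij, rfl⟩) <;>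
      simp only [map_mul, map_pow, map_inv, FreeGroup.lift_apply_of, mul_inv_eq_one, f,
        Option.elim]
    · exact h.sq_z
    · exact (h.commute i i.2).eq
    · exact h.sq_t i i.2
    · rw [hij]
      exact h.cube i (hij ▸ j.2)
    · exact h.far i j i.2 j.2 hij
  intro h1
  exact hz (by simpa [f] using congrArg (toGroup hrels) h1)

theorem of_none_ne_one : (of none : PresentedGroup (schurRels n)) ≠ 1 :=
  have ⟨_, h⟩ := exists_isSchurFamily_clifford (n - 1)
  of_none_ne_one_of_isSchurFamily n h neg_one_ne_one_clifford

theorem of_none_mem_center : (of none : PresentedGroup (schurRels n)) ∈ center _ := by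
  have h : closure (Set.range of) ≤ centralizer {(of none : PresentedGroup (schurRels n))} := by
    rw [closure_le]
    rintro _ ⟨_ | i, rfl⟩
    · exact mem_centralizer_singleton_iff.mpr rfl
    · exact mem_centralizer_singleton_iff.mpr (commute_of_none_of_some i).eq.symm
  rw [closure_range_of] at h
  exact mem_center_iff.mpr fun g => mem_centralizer_singleton_iff.mp (h (mem_top g))

theorem closureUpTo_schurT : closureUpTo (of none) (schurT n) (n - 1) = ⊤ := by
  rw [eq_top_iff, ← closure_range_of, closureUpTo]
  refine closure_mono ?_
  rintro _ ⟨_ | i, rfl⟩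
  · exact Set.mem_insert _ _
  · exact Set.mem_insert_of_mem _ ⟨i, i.2, schurT_of_lt i.2⟩

theorem mk_schurGroup_le : #(PresentedGroup (schurRels n)) ≤ 2 * n.factorial := by
  have h := (isSchurFamily_schurT n).mk_closureUpTo_le le_rfl
  rw [closureUpTo_schurT, coe_top, mk_univ] at h
  rcases n with _ | n
  · simpa using h
  · simpa using h

instance : Finite (PresentedGroup (schurRels n)) :=
  lt_aleph0_iff_finite.mp ((mk_schurGroup_le n).trans_lt (by exact_mod_cast natCast_lt_aleph0))

theorem card_schurGroup_le : Nat.card (PresentedGroup (schurRels n)) ≤ 2 * n.factorial := by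
  exact_mod_cast Nat.cast_card.trans_le (mk_schurGroup_le n)

end Presentation

end SchurCover

open SchurCover

/-- **`π⁻¹(Aₙ)` is a stem extension of `Aₙ` (a Schur covering group) for `n ≥ 8`**
(Lemma 2.6). Let `n ≥ 8`, let `U` be the group presented by generators
`z, t₁, ..., t_{n-1}` and Schur's relations, and let `π : U → Sₙ` be the surjection with
`π(z) = 1` and `π(tᵢ) = (i, i+1)`. Then `V := π⁻¹(Aₙ)` is a stem extension of `Aₙ` with
kernel `⟨z⟩` of order 2: `⟨z⟩ ⊆ Z(V) ∩ [V, V]` and `V/⟨z⟩ ≅ Aₙ`; in particular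
`|V| = n!`. -/
theorem preimage_alternating_stem_extension (n : ℕ) (hn : 8 ≤ n)
    (π : PresentedGroup (schurRels n) →* Equiv.Perm (Fin n))
    (hπz : π (PresentedGroup.of none) = 1)
    (hπt : ∀ i : Fin (n - 1),
      π (PresentedGroup.of (some i)) =
        Equiv.swap ⟨i.1, by have := i.2; omega⟩ ⟨i.1 + 1, by have := i.2; omega⟩) :
    ∃ hz : (PresentedGroup.of (rels := schurRels n) none) ∈
        Subgroup.comap π (alternatingGroup (Fin n)),
      (⟨_, hz⟩ : Subgroup.comap π (alternatingGroup (Fin n))) ∈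
          Subgroup.center ↥(Subgroup.comap π (alternatingGroup (Fin n))) ∧
      (⟨_, hz⟩ : Subgroup.comap π (alternatingGroup (Fin n))) ∈
          commutator ↥(Subgroup.comap π (alternatingGroup (Fin n))) ∧
      (PresentedGroup.of (rels := schurRels n) none) ≠ 1 ∧
      (PresentedGroup.of (rels := schurRels n) none) ^ 2 = 1 ∧
      (∃ φ : ↥(Subgroup.comap π (alternatingGroup (Fin n))) →* ↥(alternatingGroup (Fin n)),
        Function.Surjective φ ∧
        φ.ker = Subgroup.zpowers (⟨_, hz⟩ : Subgroup.comap π (alternatingGroup (Fin n)))) ∧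
      Nat.card ↥(Subgroup.comap π (alternatingGroup (Fin n))) = n.factorial := by
  obtain ⟨m, rfl⟩ : ∃ m, n = m + 1 := ⟨n - 1, by omega⟩
  set V := comap π (alternatingGroup (Fin (m + 1)))
  have hfam := isSchurFamily_schurT (m + 1)
  have hord := orderOf_eq_prime hfam.sq_z (of_none_ne_one _)
  have hsurj := surjective_of_swap_castSucc_succ_mem_range π fun i => ⟨_, hπt i⟩
  have hker := π.ker_eq_zpowers_of_card_le hsurj hπz hord (by
    rw [Nat.card_perm, Nat.card_fin]
    exact card_schurGroup_le _)
  have hz : of none ∈ V := by simp [V, hπz]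
  have hV (i j : ℕ) (hi : i < m) (hj : j < m) : schurT (m + 1) i * schurT (m + 1) j ∈ V := by
    rw [mem_comap, map_mul, schurT_of_lt hi, schurT_of_lt hj, hπt, hπt]
    exact swap_mul_swap_mem_alternatingGroup (by simp [Fin.ext_iff]) (by simp [Fin.ext_iff])
  have hcomm : (⟨of none, hz⟩ : V) = ⁅(⟨_, hV 0 2 (by omega) (by omega)⟩ : V),
      ⟨_, hV 0 4 (by omega) (by omega)⟩⁆ :=
    Subtype.ext (hfam.commutatorElement_mul_mul (by omega) le_rfl le_rfl).symm
  have : Nontrivial (Fin (m + 1)) := Fin.nontrivial_iff_two_le.mpr (by omega)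
  have hcenter : (⟨of none, hz⟩ : V) ∈ center V :=
    mem_center_iff.mpr fun g => Subtype.ext (mem_center_iff.mp (of_none_mem_center _) g.1)
  refine ⟨hz, hcenter, hcomm ▸ commutator_mem_commutator (mem_top _) (mem_top _),
    of_none_ne_one _, hfam.sq_z, ⟨_, π.subgroupComap_surjective_of_surjective _ hsurj,
      π.ker_subgroupComap_eq_zpowers hker _ hz⟩, ?_⟩
  rw [π.card_comap_of_ker_eq_zpowers hsurj hker, hord, Nat.card_eq_fintype_card,
    two_mul_card_alternatingGroup, Fintype.card_perm, Fintype.card_fin]
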